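/- arXiv:math/0209214 — 3 statements merged into one kernel-verified Lean document; each statement's English description precedes it below -/
import Mathlib

section
/- Let Γ be the group with presentation ⟨a, b | a³ = b⁴ = (ab²)² = 1⟩. Then Γ is isomorphic to the amalgamated free product S₃ *_{C₂} C₄, where S₃ is generated by {a, b²} and C₄ by b. -/
open Equiv

/-- The relations `a³ = b⁴ = (ab²)² = 1` of the group `Γ`. -/
def gammaRels : Set (FreeGroup (Fin 2)) :=
  {FreeGroup.of 0 ^ 3, FreeGroup.of 1 ^ 4,
    (FreeGroup.of 0 * FreeGroup.of 1 ^ 2) ^ 2}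

/-- The two factors of the amalgam `S₃ *_{C₂} C₄`: `S₃` (indexed by `true`)
and the cyclic group `C₄` of order 4 (indexed by `false`). -/
def AmalgamFactor : Bool → Type
  | true => Equiv.Perm (Fin 3)
  | false => Multiplicative (ZMod 4)

instance : ∀ i, Group (AmalgamFactor i) := fun i => by
  cases i <;> (unfold AmalgamFactor; infer_instance)

/-- The embedding of `C₂` into `S₃` sending the generator to the
order-2 element `y = (0 1)`. -/
def c2ToS3 : Multiplicative (ZMod 2) →* Equiv.Perm (Fin 3) where
  toFun x := Equiv.swap 0 1 ^ (Multiplicative.toAdd x).val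
  map_one' := by decide
  map_mul' := by decide

/-- The embedding of `C₂` into `C₄` sending the generator to the square of
the generator of `C₄`. -/
def c2ToC4 : Multiplicative (ZMod 2) →* Multiplicative (ZMod 4) :=
  AddMonoidHom.toMultiplicative
    { toFun := fun x => (2 * x.val : ZMod 4)
      map_zero' := by decide
      map_add' := by decide }

/-- The amalgamation data for `S₃ *_{C₂} C₄`: the common subgroup `C₂`
is embedded as `⟨(0 1)⟩ ≤ S₃` and as the unique order-2 subgroup of `C₄`. -/
def amalgamMap : ∀ i : Bool, Multiplicative (ZMod 2) →* AmalgamFactor i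
  | true => c2ToS3
  | false => c2ToC4

/-! `a ↦ (0 1 2)` and `b ↦ g`, the generator of `C₄`, respect the relations of `Γ` because the
amalgamation identifies `g²` with `(0 1)`, and `(0 1 2)(0 1)` is an involution. Conversely `a`
and `b²` satisfy the relations of the dihedral group `D₃ ≅ S₃`, and `b` has order dividing 4;
the resulting maps `S₃ → Γ` and `C₄ → Γ` agree on `C₂`, both sending its generator to `b²`.
The two composites fix generators (`a, b` of `Γ`; `(0 1 2), (0 1)` of `S₃`; `g` of `C₄`). -/

namespace ZMod

variable {G : Type*} [Group G] {n : ℕ} [NeZero n]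

def homOfPowEqOne (B : G) (hB : B ^ n = 1) : Multiplicative (ZMod n) →* G where
  toFun x := B ^ ZMod.val (Multiplicative.toAdd x)
  map_one' := by simp
  map_mul' x y := by
    rw [toAdd_mul, val_add, ← pow_eq_pow_mod _ hB, pow_add]

@[simp]
lemma homOfPowEqOne_ofAdd (B : G) (hB : B ^ n = 1) (x : ZMod n) :
    homOfPowEqOne B hB (.ofAdd x) = B ^ x.val :=
  rfl

lemma homOfPowEqOne_ofAdd_one (B : G) (hB : B ^ n = 1) :
    homOfPowEqOne B hB (.ofAdd 1) = B := by
  rw [homOfPowEqOne_ofAdd, val_one_eq_one_mod, ← pow_eq_pow_mod _ hB, pow_one]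

lemma monoidHom_ext {M : Type*} [Monoid M] {f g : Multiplicative (ZMod n) →* M}
    (h : f (.ofAdd 1) = g (.ofAdd 1)) : f = g := by
  refine MonoidHom.ext fun x => ?_
  have hx : Multiplicative.ofAdd (1 : ZMod n) ^ ZMod.val (Multiplicative.toAdd x) = x := by
    rw [← ofAdd_nsmul, nsmul_one, natCast_zmod_val, ofAdd_toAdd]
  rw [← hx, map_pow, map_pow, h]

end ZMod

lemma pow_mul_eq_mul_inv_pow {G : Type*} [Group G] {A T : G} (hT : T ^ 2 = 1)
    (hAT : (A * T) ^ 2 = 1) (k : ℕ) : A ^ k * T = T * (A ^ k)⁻¹ := by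
  have hTinv : T⁻¹ = T := inv_eq_of_mul_eq_one_right (by rw [← sq, hT])
  have hconj : T * A * T⁻¹ = A⁻¹ := by
    rw [hTinv]
    exact eq_inv_of_mul_eq_one_right (by rw [← hAT, sq]; group)
  rw [← inv_pow, ← hconj, conj_pow, hTinv, ← mul_assoc, ← mul_assoc T T, ← sq, hT, one_mul]

namespace DihedralGroup

variable {G : Type*} [Group G] {n : ℕ} [NeZero n]

def lift (A T : G) (hA : A ^ n = 1) (hT : T ^ 2 = 1) (hAT : (A * T) ^ 2 = 1) :
    DihedralGroup n →* G where
  toFun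
    | r i => ZMod.homOfPowEqOne A hA (.ofAdd i)
    | sr i => T * ZMod.homOfPowEqOne A hA (.ofAdd i)
  map_one' := map_one _
  map_mul' x y := by
    set φ := ZMod.homOfPowEqOne A hA
    have hφ (i : ZMod n) : φ (.ofAdd i) * T = T * φ (.ofAdd (-i)) := by
      rw [ofAdd_neg, map_inv]
      exact pow_mul_eq_mul_inv_pow hT hAT _
    rcases x with i | i <;> rcases y with j | j
    · dsimp only [r_mul_r]
      rw [ofAdd_add, map_mul]
    · dsimp only [r_mul_sr]
      rw [sub_eq_neg_add, ofAdd_add, map_mul, ← mul_assoc, ← mul_assoc, hφ]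
    · dsimp only [sr_mul_r]
      rw [ofAdd_add, map_mul, mul_assoc]
    · dsimp only [sr_mul_sr]
      rw [sub_eq_neg_add, ofAdd_add, map_mul, ← mul_assoc, mul_assoc T, hφ, ← mul_assoc, ← sq,
        hT, one_mul]

@[simp]
lemma lift_r (A T : G) (hA : A ^ n = 1) (hT : T ^ 2 = 1) (hAT : (A * T) ^ 2 = 1)
    (i : ZMod n) : lift A T hA hT hAT (r i) = A ^ i.val :=
  rfl

@[simp]
lemma lift_sr (A T : G) (hA : A ^ n = 1) (hT : T ^ 2 = 1) (hAT : (A * T) ^ 2 = 1)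
    (i : ZMod n) : lift A T hA hT hAT (sr i) = T * A ^ i.val :=
  rfl

end DihedralGroup

open Monoid

noncomputable def dihedralThreeEquivPerm : DihedralGroup 3 ≃* Perm (Fin 3) :=
  MulEquiv.ofBijective
    (DihedralGroup.lift c[0, 1, 2] (swap 0 1) (by decide) (by decide) (by decide)) (by decide)

lemma dihedralThreeEquivPerm_symm_cycle : dihedralThreeEquivPerm.symm c[0, 1, 2] = .r 1 :=
  (MulEquiv.symm_apply_eq _).2 (by decide)

lemma dihedralThreeEquivPerm_symm_swap : dihedralThreeEquivPerm.symm (swap 0 1) = .sr 0 :=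
  (MulEquiv.symm_apply_eq _).2 (by decide)

lemma Equiv.Perm.closure_cycle_swap_fin_three :
    Subgroup.closure {c[0, 1, 2], swap 0 1} = (⊤ : Subgroup (Perm (Fin 3))) :=
  closure_cycle_adjacent_swap (List.isCycle_formPerm (by decide) (by decide)) (by decide) 0

abbrev ofS3 : Perm (Fin 3) →* PushoutI amalgamMap := PushoutI.of (φ := amalgamMap) true

abbrev ofC4 : Multiplicative (ZMod 4) →* PushoutI amalgamMap := PushoutI.of (φ := amalgamMap) false

lemma ofC4_ofAdd_one_sq : ofC4 (.ofAdd 1) ^ 2 = ofS3 (swap 0 1) := by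
  have h₄ : c2ToC4 (.ofAdd 1) = .ofAdd 1 ^ 2 := by decide
  have h₃ : c2ToS3 (.ofAdd 1) = swap 0 1 := by decide
  calc ofC4 (.ofAdd 1) ^ 2 = ofC4 (c2ToC4 (.ofAdd 1)) :=
        (map_pow _ _ _).symm.trans (congrArg _ h₄.symm)
    _ = ofS3 (c2ToS3 (.ofAdd 1)) :=
        (PushoutI.of_apply_eq_base amalgamMap false (.ofAdd (1 : ZMod 2))).trans
          (PushoutI.of_apply_eq_base amalgamMap true (.ofAdd (1 : ZMod 2))).symm
    _ = ofS3 (swap 0 1) := congrArg _ h₃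

local notation "Γ" => PresentedGroup gammaRels

namespace GammaGroup

def a : Γ := PresentedGroup.of 0

def b : Γ := PresentedGroup.of 1

lemma a_pow_three : a ^ 3 = 1 := by
  rw [a, PresentedGroup.of, ← map_pow]
  exact PresentedGroup.one_of_mem (by simp [gammaRels])

lemma b_pow_four : b ^ 4 = 1 := by
  rw [b, PresentedGroup.of, ← map_pow]
  exact PresentedGroup.one_of_mem (by simp [gammaRels])

lemma a_mul_b_sq_sq : (a * b ^ 2) ^ 2 = 1 := by
  rw [a, b, PresentedGroup.of, PresentedGroup.of, ← map_pow, ← map_mul, ← map_pow]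
  exact PresentedGroup.one_of_mem (by simp [gammaRels])

lemma b_sq_sq : (b ^ 2) ^ 2 = 1 := by
  rw [← pow_mul]
  exact b_pow_four

noncomputable def ofPerm : Perm (Fin 3) →* Γ :=
  (DihedralGroup.lift a (b ^ 2) a_pow_three b_sq_sq a_mul_b_sq_sq).comp
    dihedralThreeEquivPerm.symm.toMonoidHom

lemma ofPerm_cycle : ofPerm c[0, 1, 2] = a := by
  simp [ofPerm, dihedralThreeEquivPerm_symm_cycle, ZMod.val_one]

lemma ofPerm_swap : ofPerm (swap 0 1) = b ^ 2 := by
  simp [ofPerm, dihedralThreeEquivPerm_symm_swap]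

noncomputable def ofAmalgamFactor : ∀ i, AmalgamFactor i →* Γ
  | true => ofPerm
  | false => ZMod.homOfPowEqOne b b_pow_four

lemma ofAmalgamFactor_comp_amalgamMap (i : Bool) :
    (ofAmalgamFactor i).comp (amalgamMap i) = ZMod.homOfPowEqOne (b ^ 2) b_sq_sq := by
  refine ZMod.monoidHom_ext ?_
  rw [MonoidHom.comp_apply, ZMod.homOfPowEqOne_ofAdd_one]
  cases i
  · show ZMod.homOfPowEqOne b b_pow_four (c2ToC4 (.ofAdd 1)) = _
    rw [show c2ToC4 (.ofAdd 1) = .ofAdd 1 ^ 2 by decide, map_pow, ZMod.homOfPowEqOne_ofAdd_one]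
  · show ofPerm (c2ToS3 (.ofAdd 1)) = _
    rw [show c2ToS3 (.ofAdd 1) = swap 0 1 by decide, ofPerm_swap]

noncomputable def ofPushout : PushoutI amalgamMap →* Γ :=
  PushoutI.lift ofAmalgamFactor _ ofAmalgamFactor_comp_amalgamMap

lemma ofPushout_ofS3 (x : Perm (Fin 3)) : ofPushout (ofS3 x) = ofPerm x :=
  PushoutI.lift_of ofAmalgamFactor _ ofAmalgamFactor_comp_amalgamMap (i := true) x

lemma ofPushout_ofC4 (x : Multiplicative (ZMod 4)) :
    ofPushout (ofC4 x) = ZMod.homOfPowEqOne b b_pow_four x :=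
  PushoutI.lift_of ofAmalgamFactor _ ofAmalgamFactor_comp_amalgamMap (i := false) x

def toPushout : Γ →* PushoutI amalgamMap :=
  PresentedGroup.toGroup (f := ![ofS3 c[0, 1, 2], ofC4 (.ofAdd 1)]) <| by
    rintro r (rfl | rfl | rfl)
    · rw [map_pow, FreeGroup.lift_apply_of, Matrix.cons_val_zero, ← map_pow,
        show (c[0, 1, 2] : Perm (Fin 3)) ^ 3 = 1 by decide, map_one]
    · rw [map_pow, FreeGroup.lift_apply_of, Matrix.cons_val_one, Matrix.cons_val_zero,
        ← map_pow, show Multiplicative.ofAdd (1 : ZMod 4) ^ 4 = 1 by decide, map_one]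
    · rw [map_pow, map_mul, map_pow, FreeGroup.lift_apply_of, FreeGroup.lift_apply_of,
        Matrix.cons_val_zero, Matrix.cons_val_one, Matrix.cons_val_zero, ofC4_ofAdd_one_sq,
        ← map_mul, ← map_pow, show (c[0, 1, 2] * swap 0 1 : Perm (Fin 3)) ^ 2 = 1 by decide,
        map_one]

lemma toPushout_a : toPushout a = ofS3 c[0, 1, 2] :=
  PresentedGroup.toGroup.of _

lemma toPushout_b : toPushout b = ofC4 (.ofAdd 1) :=
  PresentedGroup.toGroup.of _

lemma ofPushout_comp_toPushout : ofPushout.comp toPushout = MonoidHom.id Γ := by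
  refine PresentedGroup.ext fun i => ?_
  fin_cases i
  · show ofPushout (toPushout a) = a
    rw [toPushout_a, ofPushout_ofS3, ofPerm_cycle]
  · show ofPushout (toPushout b) = b
    rw [toPushout_b, ofPushout_ofC4, ZMod.homOfPowEqOne_ofAdd_one]

lemma toPushout_comp_ofPushout :
    toPushout.comp ofPushout = MonoidHom.id (PushoutI amalgamMap) := by
  refine PushoutI.hom_ext_nonempty fun i => ?_
  cases i
  · show toPushout.comp (ofPushout.comp ofC4) = ofC4
    refine ZMod.monoidHom_ext ?_
    rw [MonoidHom.comp_apply, MonoidHom.comp_apply, ofPushout_ofC4,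
      ZMod.homOfPowEqOne_ofAdd_one, toPushout_b]
  · show toPushout.comp (ofPushout.comp ofS3) = ofS3
    refine MonoidHom.eq_of_eqOn_dense Equiv.Perm.closure_cycle_swap_fin_three ?_
    rintro _ (rfl | rfl)
    · simp only [MonoidHom.comp_apply, ofPushout_ofS3, ofPerm_cycle, toPushout_a]
    · simp only [MonoidHom.comp_apply, ofPushout_ofS3, ofPerm_swap, map_pow, toPushout_b,
        ofC4_ofAdd_one_sq]

end GammaGroup

/-- The group `Γ = ⟨a, b | a³ = b⁴ = (ab²)² = 1⟩` is isomorphic to the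
amalgamated free product `S₃ *_{C₂} C₄`, via an isomorphism carrying `a` to the
3-cycle `(0 1 2)` in the `S₃` factor (so that `S₃` is generated by the images of
`a` and `b²`) and `b` to the generator of the `C₄` factor. -/
theorem stmt0 :
    ∃ e : PresentedGroup gammaRels ≃* Monoid.PushoutI amalgamMap,
      e (PresentedGroup.of 0) = Monoid.PushoutI.of (φ := amalgamMap) true c[0, 1, 2] ∧
      e (PresentedGroup.of 1) =
        Monoid.PushoutI.of (φ := amalgamMap) false (Multiplicative.ofAdd (1 : ZMod 4)) :=
  ⟨GammaGroup.toPushout.toMulEquiv GammaGroup.ofPushout GammaGroup.ofPushout_comp_toPushout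
      GammaGroup.toPushout_comp_ofPushout, GammaGroup.toPushout_a, GammaGroup.toPushout_b⟩
end

section
/- Suppose f : Γ → S_L is a homomorphism from Γ = ⟨a, b | a³ = b⁴ = (ab²)² = 1⟩ to a symmetric group on a set L of size n, such that f(ab) is an n-cycle and f(b) fixes some point p ∈ L. Adjoin six new points p₁,…,p₆ to L, and define g(a) = (p₁ p₂ p₃)(p₄ p₅ p₆), g(b) = (p p₁)(p₂ p₄ p₃ p₅) in the symmetric group on L ∪ {p₁,…,p₆}. Then h(a) = f(a)g(a), h(b) = f(b)g(b) extends to a homomorphism h : Γ → S_{L∪{p₁,…,p₆}}, and h(ab) is an (n+6)-cycle. -/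
/-! Let `g₀ : Γ → S₆` send `a ↦ (p₁ p₂ p₃)(p₄ p₅ p₆)` and `b ↦ (p₂ p₄ p₃ p₅)` (the relations are
checked by computation), and let `A = f(a) g₀(a)`, `B₀ = f(b) g₀(b)` be the images of `a`, `b` under
`f × g₀`. Then `h(a) = A` and `h(b) = t B₀` with `t = (p p₁)`. As `t` is an involution commuting with
`B₀` (which fixes `p` and `p₁`), `(t B₀)² = B₀²`, so the relations of `Γ` hold for `(A, t B₀)` because
they hold for `(A, B₀)`. Moreover `h(ab) = (A t A⁻¹)(A B₀) = (f(a)p  p₂) · f(ab) g₀(ab)`, where `f(ab)`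
is a full cycle on `L` and `g₀(ab)` a 6-cycle on the new points; a transposition joining two disjoint
cycles merges them into one `(n+6)`-cycle. -/

open Equiv Equiv.Perm

local notation "Γ" => PresentedGroup gammaRels

def IsGammaPair {G : Type*} [Group G] (x y : G) : Prop :=
  x ^ 3 = 1 ∧ y ^ 4 = 1 ∧ (x * y ^ 2) ^ 2 = 1

section GammaPair

variable {G H : Type*} [Group G] [Group H] {x y : G}

theorem isGammaPair_of : IsGammaPair (PresentedGroup.of 0 : Γ) (PresentedGroup.of 1) := by
  have hrel : ∀ r ∈ gammaRels, PresentedGroup.mk gammaRels r = 1 :=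
    fun _ => PresentedGroup.one_of_mem
  exact ⟨hrel (.of 0 ^ 3) (by simp [gammaRels]), hrel (.of 1 ^ 4) (by simp [gammaRels]),
    hrel ((.of 0 * .of 1 ^ 2) ^ 2) (by simp [gammaRels])⟩

theorem IsGammaPair.map (h : IsGammaPair x y) (φ : G →* H) : IsGammaPair (φ x) (φ y) := by
  obtain ⟨h₁, h₂, h₃⟩ := h
  exact ⟨by rw [← map_pow, h₁, map_one], by rw [← map_pow, h₂, map_one],
    by rw [← map_pow, ← map_mul, ← map_pow, h₃, map_one]⟩

theorem IsGammaPair.mul_right_of_commute {t : G} (h : IsGammaPair x y) (ht : t ^ 2 = 1)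
    (hty : Commute t y) : IsGammaPair x (t * y) := by
  have hsq : (t * y) ^ 2 = y ^ 2 := by rw [hty.mul_pow, ht, one_mul]
  obtain ⟨h₁, h₂, h₃⟩ := h
  refine ⟨h₁, ?_, by rwa [hsq]⟩
  rw [show 4 = 2 * 2 from rfl, pow_mul, hsq, ← pow_mul]
  exact h₂

def gammaLift (x y : G) (h : IsGammaPair x y) : Γ →* G :=
  PresentedGroup.toGroup (f := ![x, y]) <| by
    obtain ⟨h₁, h₂, h₃⟩ := h
    simpa [gammaRels] using ⟨h₁, h₂, h₃⟩

@[simp]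
theorem gammaLift_of_zero (h : IsGammaPair x y) : gammaLift x y h (PresentedGroup.of 0) = x :=
  PresentedGroup.toGroup.of _

@[simp]
theorem gammaLift_of_one (h : IsGammaPair x y) : gammaLift x y h (PresentedGroup.of 1) = y :=
  PresentedGroup.toGroup.of _

end GammaPair

section Perm

variable {α β : Type*}

theorem Equiv.Perm.commute_swap [DecidableEq α] {f : Perm α} {x y : α} (hx : f x = x)
    (hy : f y = y) : Commute (swap x y) f := by
  rw [Commute, SemiconjBy, mul_swap_eq_swap_mul, hx, hy]

theorem Equiv.Perm.sameCycle_of_cycleType_eq [Fintype α] [DecidableEq α] {f : Perm α}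
    (h : f.cycleType = {Fintype.card α}) (x y : α) : f.SameCycle x y := by
  have hsupp : f.support = Finset.univ :=
    Finset.eq_univ_of_card _ (by rw [← sum_cycleType, h, Multiset.sum_singleton])
  have hmoves : ∀ z, f z ≠ z := fun z => mem_support.mp (hsupp ▸ Finset.mem_univ z)
  exact (card_cycleType_eq_one.mp (by simp [h])).sameCycle (hmoves x) (hmoves y)

theorem Equiv.Perm.cycleType_eq_of_sameCycle [Fintype α] [DecidableEq α] [Nontrivial α]
    {f : Perm α} (h : ∀ x y, f.SameCycle x y) : f.cycleType = {Fintype.card α} := by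
  have hmoves : ∀ z, f z ≠ z := fun z hz => by
    obtain ⟨w, hw⟩ := exists_ne z
    exact hw ((h z w).eq_of_left hz).symm
  have hsupp : f.support = Finset.univ :=
    Finset.eq_univ_of_forall fun z => mem_support.mpr (hmoves z)
  obtain ⟨z⟩ := (inferInstance : Nonempty α)
  rw [IsCycle.cycleType ⟨z, hmoves z, fun w _ => h z w⟩, hsupp, Finset.card_univ]

theorem Equiv.Perm.sameCycle_of_map_apply_eq {δ : Type*} [Finite α] {γ : Perm α} {C : Perm δ}
    (e : α → δ) {x : α} (hγ : ∀ q, γ.SameCycle x q) (hC : ∀ q, γ q ≠ x → C (e q) = e (γ q))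
    (q : α) : C.SameCycle (e x) (e q) := by
  obtain ⟨k, rfl⟩ := (hγ q).exists_nat_pow_eq
  induction k with
  | zero => rfl
  | succ k ih =>
    rw [pow_succ', Perm.mul_apply]
    by_cases hk : γ ((γ ^ k) x) = x
    · rw [hk]
    · rw [← hC _ hk]
      exact sameCycle_apply_right.mpr ih

theorem Equiv.Perm.sameCycle_swap_mul_sumCongr [DecidableEq α] [DecidableEq β] [Finite α]
    [Finite β] {γ : Perm α} {τ : Perm β} (hγ : ∀ u v, γ.SameCycle u v)
    (hτ : ∀ u v, τ.SameCycle u v) (x : α) (y : β) (u v : α ⊕ β) :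
    (swap (Sum.inl x) (Sum.inr y) * sumCongr γ τ).SameCycle u v := by
  set C := swap (Sum.inl x) (Sum.inr y) * sumCongr γ τ
  have hL : ∀ q, C.SameCycle (Sum.inl x) (Sum.inl q) :=
    sameCycle_of_map_apply_eq Sum.inl (hγ x) fun q hq => by
      simp [C, swap_apply_of_ne_of_ne, hq]
  have hR : ∀ j, C.SameCycle (Sum.inr y) (Sum.inr j) :=
    sameCycle_of_map_apply_eq Sum.inr (hτ y) fun j hj => by
      simp [C, swap_apply_of_ne_of_ne, hj]
  have hxy : C.SameCycle (Sum.inl x) (Sum.inr y) := by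
    have hlink : C (Sum.inl (γ⁻¹ x)) = Sum.inr y := by simp [C]
    exact hlink ▸ sameCycle_apply_right.mpr (hL _)
  have hall : ∀ w, C.SameCycle (Sum.inl x) w := by
    rintro (q | j)
    exacts [hL q, hxy.trans (hR j)]
  exact (hall u).symm.trans (hall v)

end Perm

theorem isGammaPair_fin_six : IsGammaPair (c[0, 1, 2] * c[3, 4, 5] : Perm (Fin 6)) c[1, 3, 2, 4] :=
  ⟨by decide, by decide, by decide⟩

-- The product is the 6-cycle (0 1 4 2 5 3).
theorem sameCycle_fin_six (u v : Fin 6) :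
    (c[0, 1, 2] * c[3, 4, 5] * c[1, 3, 2, 4] : Perm (Fin 6)).SameCycle u v := by
  revert u v
  decide

/-- Suppose `f : Γ → S_L` is a homomorphism from `Γ = ⟨a, b | a³ = b⁴ = (ab²)² = 1⟩`
to the symmetric group of a finite set `L` with `n` elements, such that `f(ab)` is an
`n`-cycle and `f(b)` fixes a point `p ∈ L`.  Adjoin six new points `p₁, …, p₆`
(the elements of `Fin 6`), and set `g(a) = (p₁ p₂ p₃)(p₄ p₅ p₆)` and
`g(b) = (p p₁)(p₂ p₄ p₃ p₅)` in the symmetric group of `L ⊕ Fin 6`.  Then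
`h(a) = f(a) g(a)`, `h(b) = f(b) g(b)` (with `f(a)`, `f(b)` acting on `L ⊕ Fin 6`
fixing the new points) extends to a homomorphism `h : Γ → S_{L ⊕ Fin 6}`, and
`h(ab)` is an `(n+6)`-cycle. -/
theorem stmt3 (L : Type*) [Fintype L] [DecidableEq L]
    (f : PresentedGroup gammaRels →* Perm L) (p : L)
    (hcyc : (f (PresentedGroup.of 0 * PresentedGroup.of 1)).cycleType = {Fintype.card L})
    (hfix : f (PresentedGroup.of 1) p = p) :
    let ga : Perm (L ⊕ Fin 6) := Equiv.sumCongr (1 : Perm L) (c[0, 1, 2] * c[3, 4, 5])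
    let gb : Perm (L ⊕ Fin 6) :=
      Equiv.swap (Sum.inl p) (Sum.inr 0) * Equiv.sumCongr (1 : Perm L) c[1, 3, 2, 4]
    ∃ h : PresentedGroup gammaRels →* Perm (L ⊕ Fin 6),
      h (PresentedGroup.of 0) =
        Equiv.sumCongr (f (PresentedGroup.of 0)) (1 : Perm (Fin 6)) * ga ∧
      h (PresentedGroup.of 1) =
        Equiv.sumCongr (f (PresentedGroup.of 1)) (1 : Perm (Fin 6)) * gb ∧
      (h (PresentedGroup.of 0 * PresentedGroup.of 1)).cycleType = {Fintype.card L + 6} := by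
  intro ga gb
  set α := f (PresentedGroup.of 0)
  set β := f (PresentedGroup.of 1)
  set σa : Perm (Fin 6) := c[0, 1, 2] * c[3, 4, 5]
  set σb : Perm (Fin 6) := c[1, 3, 2, 4]
  set t : Perm (L ⊕ Fin 6) := swap (Sum.inl p) (Sum.inr 0)
  have hpair : IsGammaPair (Perm.sumCongr α σa) (Perm.sumCongr β σb) := by
    simpa using isGammaPair_of.map
      ((sumCongrHom L (Fin 6)).comp (f.prod (gammaLift σa σb isGammaPair_fin_six)))
  have hcomm : Commute t (Perm.sumCongr β σb) :=
    commute_swap (by simp [hfix]) (congrArg Sum.inr (by decide))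
  refine ⟨gammaLift _ _ (hpair.mul_right_of_commute (swap_mul_self _ _) hcomm), ?_, ?_, ?_⟩
  · simp [ga, σa, sumCongr_mul]
  · have hcomm₁ : Commute t (Perm.sumCongr β 1) := commute_swap (by simp [hfix]) (by simp)
    rw [gammaLift_of_one, ← mul_assoc, ← hcomm₁.eq, mul_assoc, sumCongr_mul, mul_one, one_mul]
  · have hγ : ∀ u v, (α * β).SameCycle u v :=
      sameCycle_of_cycleType_eq (by rwa [map_mul] at hcyc)
    have : Nontrivial (L ⊕ Fin 6) := Sum.inr_injective.nontrivial
    have hcard : Fintype.card (L ⊕ Fin 6) = Fintype.card L + 6 := by simp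
    rw [map_mul, gammaLift_of_zero, gammaLift_of_one, ← mul_assoc, mul_swap_eq_swap_mul, mul_assoc,
      sumCongr_mul, ← hcard]
    exact cycleType_eq_of_sameCycle (sameCycle_swap_mul_sumCongr hγ sameCycle_fin_six _ _)
end

section
/- Let Γ = A *_C B be an amalgamated free product of finite groups where C is a proper subgroup of both A and B. Then Γ has a finite-index subgroup which is a free group. -/
/-!
Choose right transversals `S i ∋ 1` of `C` in the factors. The amalgam `Γ` acts on the finite set
`Ω = C × S true × S false`: the factor `G i` sees `(c, s)` as the element `φ i c * s i` and acts by
left multiplication, and both factors let `C` act on the first coordinate only. The stabilizer `H`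
of `(1, 1, 1)` therefore has finite index. Schreier's method, with the transversal
`(c, s) ↦ (φ c * s true) * s false`, shows that `H` is generated by the commutators
`[a, b] = a⁻¹ b⁻¹ a b` with `a ∈ S true`, `b ∈ S false` both nontrivial. They form a free basis:
given values `f a b` in a group `X`, twisting the action of the second factor by the weights
`(c, s) ↦ f (s true) (s false)` gives a homomorphism `Γ → X ≀ Sym Ω` whose restriction to `H`,
read off at the base point, sends `[a, b]` to `f a b`.
-/

open Function Equiv

abbrev Wreath (X Ω : Type*) [Group X] : Type _ := (Ω → X) ⋊[mulAutArrow] Perm Ω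

namespace Wreath

variable {X Ω : Type*} [Group X]

lemma left_mul (w₁ w₂ : Wreath X Ω) (ω : Ω) :
    (w₁ * w₂).left ω = w₁.left ω * w₂.left (w₁.right⁻¹ ω) := rfl

noncomputable def twist (σ : Ω → X) : Perm Ω →* Wreath X Ω :=
  (MulAut.conj (SemidirectProduct.inl σ)⁻¹).toMonoidHom.comp SemidirectProduct.inr

variable (σ : Ω → X) (π : Perm Ω)

@[simp] lemma twist_right : (twist σ π).right = π := by
  simp [twist]

@[simp] lemma twist_left (ω : Ω) : (twist σ π).left ω = (σ ω)⁻¹ * σ (π⁻¹ ω) := by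
  simp [twist]
  rfl

lemma twist_eq_inr {σ : Ω → X} {π : Perm Ω} (h : ∀ ω, σ (π ω) = σ ω) :
    twist σ π = SemidirectProduct.inr π := by
  refine SemidirectProduct.ext (funext fun ω => ?_) (twist_right σ π)
  rw [twist_left, ← h (π⁻¹ ω), Perm.coe_inv, apply_symm_apply, inv_mul_cancel]
  rfl

variable {M : Type*} [Group M]

noncomputable def evalOn (Ψ : M →* Wreath X Ω) (x : Ω) (K : Subgroup M)
    (hK : ∀ m ∈ K, (Ψ m).right x = x) : K →* X where
  toFun m := (Ψ m).left x
  map_one' := by simp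
  map_mul' m₁ m₂ := by
    have : (Ψ m₁).right⁻¹ x = x := Perm.inv_eq_iff_eq.mpr (hK m₁ m₁.2).symm
    simp only [Subgroup.coe_mul, map_mul, left_mul, this]

end Wreath

def mulLeftFstHom (G Y : Type*) [Group G] : G →* Perm (G × Y) where
  toFun g := (Equiv.mulLeft g).prodCongr (Equiv.refl Y)
  map_one' := by ext <;> simp
  map_mul' g h := by ext <;> simp [mul_assoc]

@[simp] lemma mulLeftFstHom_apply {G Y : Type*} [Group G] (g : G) (x : G × Y) :
    mulLeftFstHom G Y g x = (g * x.1, x.2) := rfl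

namespace Monoid.PushoutI.NormalWord.Transversal

variable {ι C : Type*} {G : ι → Type*} [Group C] [∀ i, Group (G i)] {φ : ∀ i, C →* G i}
  (d : Transversal φ)

noncomputable def cosetCoords (i : ι) : G i ≃ C × d.set i :=
  (d.compl i).equiv.trans
    ((MonoidHom.ofInjective (d.injective i)).toEquiv.symm.prodCongr (Equiv.refl _))

@[simp] lemma cosetCoords_symm_apply (i : ι) (x : C × d.set i) :
    (d.cosetCoords i).symm x = φ i x.1 * x.2 :=
  rfl

abbrev Space : Type _ := C × ∀ j, d.set j

def one (i : ι) : d.set i := ⟨1, d.one_mem i⟩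

def basepoint : d.Space := (1, d.one)

noncomputable def permBase : C →* Perm d.Space := mulLeftFstHom C _

variable [DecidableEq ι]

noncomputable def frame (i : ι) : G i × (∀ j : {j // j ≠ i}, d.set j) ≃ d.Space :=
  ((d.cosetCoords i).prodCongr (Equiv.refl _)).trans
    ((prodAssoc _ _ _).trans ((Equiv.refl C).prodCongr (piSplitAt i fun j => d.set j).symm))

lemma frame_symm_apply (i : ι) (ω : d.Space) :
    (d.frame i).symm ω = (φ i ω.1 * ω.2 i, fun j : {j // j ≠ i} => ω.2 j) := by
  simp [frame]

noncomputable def perm (i : ι) : G i →* Perm d.Space :=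
  (d.frame i).permCongrHom.toMonoidHom.comp (mulLeftFstHom (G i) _)

lemma perm_apply_eq_iff {i : ι} (g : G i) (ω ω' : d.Space) :
    d.perm i g ω = ω' ↔
      φ i ω'.1 * ω'.2 i = g * (φ i ω.1 * ω.2 i) ∧ ∀ j ≠ i, ω'.2 j = ω.2 j := by
  rw [← (d.frame i).symm.apply_eq_iff_eq]
  simp [perm, Equiv.permCongr_apply, frame_symm_apply, funext_iff, eq_comm]

lemma perm_comp (i : ι) : (d.perm i).comp (φ i) = d.permBase := by
  ext c ω : 2
  rw [MonoidHom.comp_apply, perm_apply_eq_iff]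
  simp [permBase, mul_assoc]

noncomputable def act : PushoutI φ →* Perm d.Space := lift d.perm d.permBase d.perm_comp

@[simp] lemma act_of {i : ι} (g : G i) : d.act (of i g) = d.perm i g := lift_of _ _ _ _

noncomputable def stabilizer : Subgroup (PushoutI φ) :=
  (MulAction.stabilizer (Perm d.Space) d.basepoint).comap d.act

lemma mem_stabilizer {γ : PushoutI φ} : γ ∈ d.stabilizer ↔ d.act γ d.basepoint = d.basepoint :=
  Iff.rfl

instance finiteIndex_stabilizer [Finite ι] [Finite C] [∀ i, Finite (G i)] :
    d.stabilizer.FiniteIndex :=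
  Subgroup.finiteIndex_of_le (MonoidHom.ker_le_comap _ _)

section Twist

variable {X : Type*} [Group X] (σ : ι → (∀ j, d.set j) → X)

noncomputable def twistedAct : PushoutI φ →* Wreath X d.Space :=
  lift (fun i => (Wreath.twist (σ i ∘ Prod.snd)).comp (d.perm i))
    (SemidirectProduct.inr.comp d.permBase) fun i => by
      ext c : 1
      rw [MonoidHom.comp_apply, MonoidHom.comp_apply, ← MonoidHom.comp_apply (d.perm i),
        perm_comp]
      exact Wreath.twist_eq_inr fun _ => rfl

@[simp] lemma twistedAct_of {i : ι} (g : G i) :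
    d.twistedAct σ (of i g) = Wreath.twist (σ i ∘ Prod.snd) (d.perm i g) := lift_of _ _ _ _

lemma twistedAct_right (γ : PushoutI φ) : (d.twistedAct σ γ).right = d.act γ := by
  suffices SemidirectProduct.rightHom.comp (d.twistedAct σ) = d.act from
    DFunLike.congr_fun this γ
  refine PushoutI.hom_ext (fun i => MonoidHom.ext fun g => ?_) (MonoidHom.ext fun c => ?_)
  · simp
  · simp [twistedAct, act]

lemma twistedAct_mul_left (γ₁ γ₂ : PushoutI φ) (ω : d.Space) :
    (d.twistedAct σ (γ₁ * γ₂)).left (d.act (γ₁ * γ₂) ω) =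
      (d.twistedAct σ γ₁).left (d.act γ₁ (d.act γ₂ ω)) *
        (d.twistedAct σ γ₂).left (d.act γ₂ ω) := by
  rw [map_mul, Wreath.left_mul, twistedAct_right, map_mul, Perm.mul_apply, Perm.coe_inv,
    symm_apply_apply]

lemma twistedAct_of_left {i : ι} (g : G i) (ω : d.Space) :
    (d.twistedAct σ (of i g)).left (d.perm i g ω) = (σ i (d.perm i g ω).2)⁻¹ * σ i ω.2 := by
  simp

end Twist

end Monoid.PushoutI.NormalWord.Transversal

namespace Monoid.PushoutI.NormalWord.Transversal

variable {C : Type*} [Group C] {G : Bool → Type*} [∀ i, Group (G i)] {φ : ∀ i, C →* G i}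
  (d : Transversal φ)

def tuple (s : d.set true) (t : d.set false) : ∀ j, d.set j
  | true => s
  | false => t

lemma basepoint_eq : d.basepoint = (1, d.tuple (d.one true) (d.one false)) := by
  refine Prod.ext rfl (funext fun j => ?_)
  cases j <;> rfl

lemma perm_true_apply_tuple_one (s : d.set true) (t : d.set false) :
    d.perm true s (1, d.tuple (d.one true) t) = (1, d.tuple s t) := by
  rw [perm_apply_eq_iff]
  simp [tuple, one]

lemma perm_true_inv_apply_tuple (s : d.set true) (t : d.set false) :
    d.perm true (s : G true)⁻¹ (1, d.tuple s t) = (1, d.tuple (d.one true) t) := by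
  rw [perm_apply_eq_iff]
  simp [tuple, one]

lemma perm_false_apply_tuple_one (s : d.set true) (t : d.set false) :
    d.perm false t (1, d.tuple s (d.one false)) = (1, d.tuple s t) := by
  rw [perm_apply_eq_iff]
  simp [tuple, one]

lemma perm_false_inv_apply_tuple (s : d.set true) (t : d.set false) :
    d.perm false (t : G false)⁻¹ (1, d.tuple s t) = (1, d.tuple s (d.one false)) := by
  rw [perm_apply_eq_iff]
  simp [tuple, one]

noncomputable def commutatorOf (p : d.set true × d.set false) : PushoutI φ :=
  of true (p.1 : G true)⁻¹ * of false (p.2 : G false)⁻¹ * of true (p.1 : G true) *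
    of false (p.2 : G false)

lemma commutatorOf_mem_stabilizer (p : d.set true × d.set false) :
    d.commutatorOf p ∈ d.stabilizer := by
  simp only [mem_stabilizer, basepoint_eq, commutatorOf, map_mul, act_of, Perm.mul_apply,
    perm_false_apply_tuple_one, perm_true_apply_tuple_one, perm_false_inv_apply_tuple,
    perm_true_inv_apply_tuple]

noncomputable def cosetRep (ω : d.Space) : PushoutI φ :=
  of true (φ true ω.1 * ω.2 true) * of false (ω.2 false : G false)

lemma cosetRep_basepoint : d.cosetRep d.basepoint = 1 := by
  simp [cosetRep, basepoint, one]

lemma cosetRep_perm_true (a : G true) (ω : d.Space) :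
    d.cosetRep (d.perm true a ω) = of true a * d.cosetRep ω := by
  obtain ⟨hmul, hsnd⟩ := (d.perm_apply_eq_iff a ω _).1 rfl
  rw [cosetRep, cosetRep, hmul, hsnd false (by decide), map_mul, mul_assoc]

lemma cosetRep_perm_false (b : G false) (ω : d.Space) :
    (d.cosetRep (d.perm false b ω))⁻¹ * of false b * d.cosetRep ω =
      (d.commutatorOf (ω.2 true, (d.perm false b ω).2 false))⁻¹ *
        d.commutatorOf (ω.2 true, ω.2 false) := by
  set ω' := d.perm false b ω
  obtain ⟨hmul, hsnd⟩ := (d.perm_apply_eq_iff b ω ω').1 rfl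
  have hb : of false b = base φ ω'.1 * of false (ω'.2 false : G false) *
      (of false (ω.2 false : G false))⁻¹ * (base φ ω.1)⁻¹ := by
    rw [eq_mul_inv_of_mul_eq hmul.symm]
    simp only [mul_inv_rev, map_mul, map_inv, of_apply_eq_base, mul_assoc]
  simp only [cosetRep, commutatorOf, hsnd true (by decide), hb, map_mul, map_inv,
    of_apply_eq_base]
  group

lemma cosetRep_inv_mul_mul_cosetRep_mem (γ : PushoutI φ) (ω : d.Space) :
    (d.cosetRep (d.act γ ω))⁻¹ * γ * d.cosetRep ω ∈
      Subgroup.closure (Set.range d.commutatorOf) := by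
  induction γ using PushoutI.induction_on generalizing ω with
  | of i g =>
    cases i with
    | true => simp [cosetRep_perm_true]
    | false =>
      rw [act_of, cosetRep_perm_false]
      exact mul_mem (inv_mem (Subgroup.subset_closure ⟨_, rfl⟩))
        (Subgroup.subset_closure ⟨_, rfl⟩)
  | base c => simp [← of_apply_eq_base φ true, cosetRep_perm_true]
  | mul x y hx hy =>
    have : (d.cosetRep (d.act (x * y) ω))⁻¹ * (x * y) * d.cosetRep ω =
        ((d.cosetRep (d.act x (d.act y ω)))⁻¹ * x * d.cosetRep (d.act y ω)) *
          ((d.cosetRep (d.act y ω))⁻¹ * y * d.cosetRep ω) := by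
      rw [map_mul, Perm.mul_apply]
      group
    rw [this]
    exact mul_mem (hx _) (hy _)

def BasisIndex : Type _ :=
  {p : d.set true × d.set false // (p.1 : G true) ≠ 1 ∧ (p.2 : G false) ≠ 1}

lemma commutatorOf_eq_one {p : d.set true × d.set false}
    (hp : ¬((p.1 : G true) ≠ 1 ∧ (p.2 : G false) ≠ 1)) : d.commutatorOf p = 1 := by
  rw [not_and_or, not_not, not_not] at hp
  rcases hp with h | h <;> simp [commutatorOf, h]

lemma stabilizer_eq_closure :
    d.stabilizer = Subgroup.closure (Set.range fun b : d.BasisIndex => d.commutatorOf b.1) := by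
  refine le_antisymm (fun γ hγ => ?_) (Subgroup.closure_le _ |>.2 <|
    Set.range_subset_iff.2 fun b => d.commutatorOf_mem_stabilizer b.1)
  have h := d.cosetRep_inv_mul_mul_cosetRep_mem γ d.basepoint
  rw [d.mem_stabilizer.1 hγ, cosetRep_basepoint, inv_one, one_mul, mul_one] at h
  refine (Subgroup.closure_le _).2 ?_ h
  rintro _ ⟨p, rfl⟩
  by_cases hp : (p.1 : G true) ≠ 1 ∧ (p.2 : G false) ≠ 1
  · exact Subgroup.subset_closure ⟨⟨p, hp⟩, rfl⟩
  · rw [commutatorOf_eq_one d hp]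
    exact Subgroup.one_mem _

section Lift

variable {X : Type*} [Group X] (f : d.BasisIndex → X)

open scoped Classical in
noncomputable def extendByOne (u : ∀ j, d.set j) : X :=
  if h : (u true : G true) ≠ 1 ∧ (u false : G false) ≠ 1 then f ⟨(u true, u false), h⟩ else 1

/-- Only the second factor is twisted: twisting both by the same weights would give a
coboundary, which vanishes on the stabilizer. -/
noncomputable def stabilizerLift : d.stabilizer →* X :=
  Wreath.evalOn (d.twistedAct fun i => cond i 1 (d.extendByOne f)) d.basepoint d.stabilizer
    fun γ hγ => by rw [twistedAct_right]; exact hγ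

lemma stabilizerLift_commutatorOf (b : d.BasisIndex) :
    d.stabilizerLift f ⟨d.commutatorOf b.1, d.commutatorOf_mem_stabilizer b.1⟩ = f b := by
  obtain ⟨⟨s, t⟩, hs, ht⟩ := b
  have hx₀ : d.act (d.commutatorOf (s, t)) d.basepoint = d.basepoint :=
    d.commutatorOf_mem_stabilizer (s, t)
  simp only [stabilizerLift, Wreath.evalOn, MonoidHom.coe_mk, OneHom.coe_mk]
  -- reading the value at `γ • x₀ = x₀` lets `twistedAct_mul_left` follow the path of `x₀`
  rw [← hx₀]
  simp only [commutatorOf, twistedAct_mul_left, act_of, twistedAct_of_left]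
  simp only [basepoint_eq, perm_false_apply_tuple_one, perm_true_apply_tuple_one,
    perm_false_inv_apply_tuple, perm_true_inv_apply_tuple]
  simp [extendByOne, tuple, one, hs, ht]

end Lift

theorem isFreeGroup_stabilizer : IsFreeGroup d.stabilizer := by
  let gens : d.BasisIndex → d.stabilizer := fun b =>
    ⟨d.commutatorOf b.1, d.commutatorOf_mem_stabilizer b.1⟩
  have hleft : LeftInverse (d.stabilizerLift FreeGroup.of) (FreeGroup.lift gens) :=
    DFunLike.congr_fun (f := (d.stabilizerLift FreeGroup.of).comp (FreeGroup.lift gens))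
      (g := MonoidHom.id _) (FreeGroup.ext_hom _ _ fun b => by
        rw [MonoidHom.comp_apply, FreeGroup.lift_apply_of]
        exact d.stabilizerLift_commutatorOf FreeGroup.of b)
  have hsubtype : d.stabilizer.subtype.comp (FreeGroup.lift gens) =
      FreeGroup.lift fun b : d.BasisIndex => d.commutatorOf b.1 :=
    FreeGroup.ext_hom _ _ fun _ => by
      rw [MonoidHom.comp_apply, FreeGroup.lift_apply_of, FreeGroup.lift_apply_of]; rfl
  refine IsFreeGroup.ofMulEquiv (MulEquiv.ofBijective (FreeGroup.lift gens)
    ⟨hleft.injective, fun γ => ?_⟩)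
  obtain ⟨w, hw⟩ : (γ : PushoutI φ) ∈
      (FreeGroup.lift fun b : d.BasisIndex => d.commutatorOf b.1).range := by
    rw [FreeGroup.range_lift_eq_closure, ← stabilizer_eq_closure]
    exact γ.2
  exact ⟨w, Subtype.ext (hw ▸ DFunLike.congr_fun hsubtype w)⟩

end Monoid.PushoutI.NormalWord.Transversal

theorem stmt7_general {C : Type*} [Group C] {G : Bool → Type*} [∀ i, Group (G i)]
    [∀ i, Finite (G i)] (φ : ∀ i, C →* G i)
    (hinj : ∀ i, Function.Injective (φ i)) :
    ∃ H : Subgroup (Monoid.PushoutI φ), H.FiniteIndex ∧ IsFreeGroup H := by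
  obtain ⟨d⟩ := Monoid.PushoutI.NormalWord.transversal_nonempty φ hinj
  have : Finite C := Finite.of_injective _ (hinj true)
  exact ⟨d.stabilizer, inferInstance, d.isFreeGroup_stabilizer⟩

/-- Let `Γ = A *_C B` be an amalgamated free product of finite groups
(formalized as the pushout of an injective family `φ i : C →* G i` indexed by
`Bool`, with `A = G true` and `B = G false`), where `C` is a proper subgroup of
both factors.  Then `Γ` has a finite-index subgroup which is a free group. -/
theorem stmt7 {C : Type*} [Group C] {G : Bool → Type*} [∀ i, Group (G i)]
    [∀ i, Finite (G i)] (φ : ∀ i, C →* G i)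
    (hinj : ∀ i, Function.Injective (φ i))
    (hproper : ∀ i, (φ i).range ≠ ⊤) :
    ∃ H : Subgroup (Monoid.PushoutI φ), H.FiniteIndex ∧ IsFreeGroup H :=
  stmt7_general φ hinj
end
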